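/- Suppose h is isotropic, i.e., there exists a primitive vector v ∈ V with h(v,v) = 0. Then for every r ∈ R there exists a primitive vector w ∈ V with h(w,w) = r. -/

import Mathlib

open MulOpposite

/-- A `*`-hermitian form on a right `A`-module `V` (right modules are encoded as
modules over the opposite ring `Aᵐᵒᵖ`): it is additive and `A`-linear in the second
variable and satisfies `h v u = (h u v)*`. -/
structure HermitianForm (A V : Type*) [Ring A] [StarRing A] [AddCommGroup V]
    [Module Aᵐᵒᵖ V] where
  toFun : V → V → A
  add_right : ∀ u v w : V, toFun u (v + w) = toFun u v + toFun u w
  smul_right : ∀ (a : A) (u v : V), toFun u (op a • v) = toFun u v * a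
  conj_symm : ∀ u v : V, toFun v u = star (toFun u v)

namespace HermitianForm

variable {A V : Type*} [Ring A] [StarRing A] [AddCommGroup V] [Module Aᵐᵒᵖ V]

/-- Non-degeneracy: the map `u ↦ h u -` is a bijection of `V` onto the dual module. -/
def Nondeg (h : HermitianForm A V) : Prop :=
  ∀ φ : V →ₗ[Aᵐᵒᵖ] A, ∃! u : V, ∀ v : V, h.toFun u v = φ v

end HermitianForm

/-- A vector of the free module `V` of rank `m` is primitive if it belongs to a basis. -/
def IsPrimitive (A : Type*) {V : Type*} [Ring A] [AddCommGroup V] [Module Aᵐᵒᵖ V]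
    (m : ℕ) (v : V) : Prop :=
  ∃ (b : Module.Basis (Fin m) Aᵐᵒᵖ V) (i : Fin m), b i = v

/-!
Pick a basis containing the isotropic vector `v` and, by non-degeneracy, a vector `u`
with `h(u, v) = 1`. For `a ∈ A` the vector `w = v a + u` has length `a* + a + h(u, u)`,
so `a = (r - h(u, u)) d` gives `h(w, w) = r`: since `r - h(u, u)` is hermitian it is
central, and `d + d* = 1`. Moreover `h(v, w) = 1`, so the functional `h(v, -)` is a unit
at `w`; over a local ring some coordinate of `w` is then a unit, and a transvection
exchanges the corresponding basis vector for `w`.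
-/

instance IsLocalRing.toIsDedekindFiniteMonoid {R : Type*} [Ring R] [IsLocalRing R] :
    IsDedekindFiniteMonoid R where
  mul_eq_one_symm {a b} hab := by
    rcases IsLocalRing.isUnit_or_isUnit_of_add_one (add_sub_cancel (b * a) 1) with ⟨u, hu⟩ | hba
    · have hb : ↑u⁻¹ * b = b := left_inv_eq_right_inv (by rw [mul_assoc, ← hu, u.inv_mul]) hab
      rw [← hb, mul_assoc, ← hu, u.inv_mul]
    · have hb : (1 - b * a) * b = 0 := by rw [sub_mul, mul_assoc, hab, one_mul, mul_one, sub_self]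
      rw [hba.mul_right_eq_zero] at hb
      simp [hb] at hab

instance MulOpposite.instIsLocalRing {R : Type*} [Semiring R] [IsLocalRing R] :
    IsLocalRing Rᵐᵒᵖ :=
  .of_isUnit_or_isUnit_of_isUnit_add fun a b h => by
    simpa only [isUnit_unop] using IsLocalRing.isUnit_or_isUnit_of_isUnit_add h.unop

namespace Module.Basis

variable {ι B V : Type*} [Ring B] [AddCommGroup V] [Module B V]

theorem exists_basis_apply_eq_of_isUnit_repr (b : Basis ι B V) (j : ι) (w : V)
    (hw : IsUnit (b.repr w j)) : ∃ b' : Basis ι B V, b' j = w := by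
  obtain ⟨c, hc⟩ := hw
  let T : V →ₗ[B] V := LinearMap.id + (b.coord j).smulRight (w - b j)
  have hT : ∀ x, T x = x + b.coord j x • (w - b j) := fun _ => rfl
  have hTj : ∀ x, b.coord j (T x) = b.coord j x * c := fun x => by
    simp [hT, hc, mul_sub]
  have hinj : Function.Injective T := by
    rw [← LinearMap.ker_eq_bot, LinearMap.ker_eq_bot']
    intro x hx
    have hxj : b.coord j x = 0 := by
      rw [← c.mul_left_eq_zero, ← hTj, hx, map_zero]
    simpa [hT, hxj] using hx
  have hsurj : Function.Surjective T := fun y => by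
    refine ⟨y - (b.coord j y * ↑c⁻¹) • (w - b j), ?_⟩
    have hj : b.coord j (y - (b.coord j y * ↑c⁻¹) • (w - b j)) = b.coord j y * ↑c⁻¹ := by
      simp [← hc, mul_sub, mul_assoc]
    rw [hT, hj, sub_add_cancel]
  refine ⟨b.map (LinearEquiv.ofBijective T ⟨hinj, hsurj⟩), ?_⟩
  show T (b j) = w
  simp [hT]

theorem exists_basis_apply_eq_of_isUnit_apply [IsLocalRing B] [Fintype ι]
    (b : Basis ι B V) (φ : V →ₗ[B] B) (w : V) (hw : IsUnit (φ w)) :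
    ∃ (b' : Basis ι B V) (j : ι), b' j = w := by
  have hsum : φ w = ∑ k, b.repr w k * φ (b k) := by
    conv_lhs => rw [← b.sum_repr w]
    simp only [map_sum, map_smul, smul_eq_mul]
  obtain ⟨j, -, hj⟩ := IsLocalRing.exists_of_isUnit_sum (hsum ▸ hw)
  obtain ⟨b', hb'⟩ := b.exists_basis_apply_eq_of_isUnit_repr j w (isUnit_of_mul_isUnit_left hj)
  exact ⟨b', j, hb'⟩

end Module.Basis

theorem IsPrimitive.exists_linearMap_apply_eq_one {A V : Type*} [Ring A] [AddCommGroup V]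
    [Module Aᵐᵒᵖ V] {m : ℕ} {v : V} (hv : IsPrimitive A m v) :
    ∃ φ : V →ₗ[Aᵐᵒᵖ] A, φ v = 1 := by
  obtain ⟨b, i, rfl⟩ := hv
  exact ⟨(opLinearEquiv Aᵐᵒᵖ).symm.toLinearMap ∘ₗ b.coord i, by simp⟩

namespace HermitianForm

variable {A V : Type*} [Ring A] [StarRing A] [AddCommGroup V] [Module Aᵐᵒᵖ V]
  (h : HermitianForm A V)

theorem add_left (u v w : V) : h.toFun (u + v) w = h.toFun u w + h.toFun v w := by
  rw [h.conj_symm, h.add_right, star_add, ← h.conj_symm, ← h.conj_symm]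

theorem smul_left (a : A) (u v : V) : h.toFun (op a • u) v = star a * h.toFun u v := by
  rw [h.conj_symm, h.smul_right, star_mul, ← h.conj_symm]

def opFunctional (v : V) : V →ₗ[Aᵐᵒᵖ] Aᵐᵒᵖ where
  toFun x := op (h.toFun v x)
  map_add' x y := by rw [h.add_right, op_add]
  map_smul' c x := by rw [← op_unop c, h.smul_right, op_mul, op_unop]; rfl

@[simp]
theorem opFunctional_apply (v x : V) : h.opFunctional v x = op (h.toFun v x) := rfl

theorem apply_smul_add_eq_one {v u : V} (hvv : h.toFun v v = 0) (huv : h.toFun u v = 1) (a : A) :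
    h.toFun v (op a • v + u) = 1 := by
  rw [h.add_right, h.smul_right, hvv, zero_mul, zero_add, h.conj_symm, huv, star_one]

theorem apply_smul_add_self {v u : V} (hvv : h.toFun v v = 0) (huv : h.toFun u v = 1)
    (a : A) : h.toFun (op a • v + u) (op a • v + u) = star a + a + h.toFun u u := by
  rw [h.add_left, h.smul_left, h.apply_smul_add_eq_one hvv huv, h.add_right, h.smul_right, huv,
    mul_one, one_mul, add_assoc]

end HermitianForm

theorem star_mul_add_mul_of_add_star_eq_one {A : Type*} [Ring A] [StarRing A] {s d : A}
    (hs : star s = s) (hsc : s ∈ Set.center A) (hd : d + star d = 1) :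
    star (s * d) + s * d = s := by
  rw [star_mul, hs, ← (Set.mem_center_iff.mp hsc).comm, ← mul_add, add_comm, hd, mul_one]

theorem stmt_5_general {A V : Type*} [Ring A] [StarRing A] [IsLocalRing A]
    [AddCommGroup V] [Module Aᵐᵒᵖ V]
    (hcent : ∀ a : A, star a = a → a ∈ Set.center A)
    (d : A) (hd : d + star d = 1)
    (m : ℕ)
    (h : HermitianForm A V) (hnd : h.Nondeg)
    (hiso : ∃ v : V, IsPrimitive A m v ∧ h.toFun v v = 0) :
    ∀ r : A, star r = r → ∃ w : V, IsPrimitive A m w ∧ h.toFun w w = r := by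
  intro r hr
  obtain ⟨v, hv, hvv⟩ := hiso
  obtain ⟨φ, hφ⟩ := hv.exists_linearMap_apply_eq_one
  obtain ⟨u, hu, -⟩ := hnd φ
  have huv : h.toFun u v = 1 := (hu v).trans hφ
  set s := r - h.toFun u u
  have hs : star s = s := by rw [star_sub, hr, ← h.conj_symm]
  refine ⟨op (s * d) • v + u, ?_, ?_⟩
  · obtain ⟨b, -⟩ := hv
    refine b.exists_basis_apply_eq_of_isUnit_apply (h.opFunctional v) _ ?_
    rw [h.opFunctional_apply, h.apply_smul_add_eq_one hvv huv, op_one]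
    exact isUnit_one
  · rw [h.apply_smul_add_self hvv huv, star_mul_add_mul_of_add_star_eq_one hs (hcent s hs) hd,
      sub_add_cancel]

/-- Lemma 3.1: if `h` is isotropic, every element `r` of the fixed ring `R` is the
length of some primitive vector. -/
theorem stmt_5 {A V : Type*} [Ring A] [StarRing A] [IsLocalRing A]
    [AddCommGroup V] [Module Aᵐᵒᵖ V]
    (hcent : ∀ a : A, star a = a → a ∈ Set.center A)
    (d : A) (hd : d + star d = 1)
    (m : ℕ) (hm : 1 ≤ m) (b : Module.Basis (Fin m) Aᵐᵒᵖ V)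
    (h : HermitianForm A V) (hnd : h.Nondeg)
    (hiso : ∃ v : V, IsPrimitive A m v ∧ h.toFun v v = 0) :
    ∀ r : A, star r = r → ∃ w : V, IsPrimitive A m w ∧ h.toFun w w = r :=
  stmt_5_general hcent d hd m h hnd hiso
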